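/- Let (R, ⊕, ≤) be a lattice ordered monoid whose order is a complete lattice, let D = (V, A) be a finite digraph with arc resources (x_a)_{a∈A} in R such that x_C ≥ 0 for every cycle C of D, and fix a destination d ∈ V. Define the sequence (b^n)_{n≥0} in R^V by b^0_d = 0, b^0_v = ⊤ for v ≠ d, b^{n+1}_d = 0, and b^{n+1}_v = b^n_v ⊓ ⨅_{a=(v,u)∈δ⁺(v)} (x_a ⊕ b^n_u) for v ≠ d; let b† be the greatest solution of the equation b_d = 0, b_v = b_v ⊓ ⨅_{a=(v,u)∈δ⁺(v)} (x_a ⊕ b_u) (v ≠ d); let b^∞_v = ⨅_{n∈ℕ} b^n_v; let ℓ* be the maximum number of arcs of an elementary path in D; and let b^opt_v = ⨅ {x_P : P a v-d path} (equal to ⊤ if there is no v-d path). Then for every vertex v and every v-d path P: b†_v ≤ b^∞_v ≤ b^{ℓ*}_v ≤ b^opt_v ≤ x_P. -/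

import Mathlib

/-- A digraph with vertex set `V` and arc set `A`: each arc has a tail and a head. -/
structure Digraph' (V A : Type*) where
  tail : A → V
  head : A → V

/-- `D.IsPathFrom v w l` : the list of arcs `l` is a path from `v` to `w` in `D`:
the tail of each arc is the head of the previous one (or `v` for the first arc),
and the head of the last arc is `w`; the empty list is the unique path from `v` to `v`. -/
def Digraph'.IsPathFrom {V A : Type*} (D : Digraph' V A) : V → V → List A → Prop
  | v, w, [] => v = w
  | v, w, a :: l => D.tail a = v ∧ D.IsPathFrom (D.head a) w l

/-- The resource of a path `P = (a₁, …, a_k)` is `x_{a₁} + ⋯ + x_{a_k}` (and `0` for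
the empty path). -/
def pathRes {A R : Type*} [AddMonoid R] (x : A → R) (l : List A) : R := (l.map x).sum

/-- A path starting at `v` is elementary if it visits each vertex at most once, i.e.,
the list of visited vertices `v, head a₁, …, head a_k` has no duplicate. -/
def Digraph'.IsElementary {V A : Type*} [DecidableEq V] (D : Digraph' V A)
    (v : V) (l : List A) : Prop :=
  (v :: l.map D.head).Nodup

/-- The sequence `(bⁿ)` of the generalized Ford-Bellman algorithm:
`b⁰ d = 0`, `b⁰ v = ⊤` for `v ≠ d`, `bⁿ⁺¹ d = 0`, and
`bⁿ⁺¹ v = bⁿ v ⊓ ⨅_{a ∈ δ⁺(v)} (x a + bⁿ (head a))` for `v ≠ d`. -/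
def bSeq {V A R : Type*} [DecidableEq V] [CompleteLattice R] [AddMonoid R]
    (D : Digraph' V A) (x : A → R) (d : V) : ℕ → V → R
  | 0 => fun v => if v = d then 0 else ⊤
  | n + 1 => fun v => if v = d then 0
      else bSeq D x d n v ⊓ ⨅ a ∈ {a : A | D.tail a = v}, (x a + bSeq D x d n (D.head a))


section Helpers

variable {V A R : Type*}

lemma pathRes_append [AddMonoid R] (x : A → R) (l₁ l₂ : List A) :
    pathRes x (l₁ ++ l₂) = pathRes x l₁ + pathRes x l₂ := by
  simp [pathRes]

lemma pathRes_cons [AddMonoid R] (x : A → R) (a : A) (l : List A) :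
    pathRes x (a :: l) = x a + pathRes x l := by
  simp [pathRes]

lemma isPathFrom_append (D : Digraph' V A) (u w : V) (l₁ l₂ : List A) :
    D.IsPathFrom u w (l₁ ++ l₂) ↔ ∃ m, D.IsPathFrom u m l₁ ∧ D.IsPathFrom m w l₂ := by
  induction l₁ generalizing u with
  | nil =>
    simp only [List.nil_append, Digraph'.IsPathFrom]
    constructor
    · intro h; exact ⟨u, rfl, h⟩
    · rintro ⟨m, rfl, h⟩; exact h
  | cons a l ih =>
    simp only [List.cons_append, Digraph'.IsPathFrom]
    constructor
    · rintro ⟨hta, hp⟩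
      obtain ⟨m, h1, h2⟩ := (ih (D.head a)).mp hp
      exact ⟨m, ⟨hta, h1⟩, h2⟩
    · rintro ⟨m, ⟨hta, h1⟩, h2⟩
      exact ⟨hta, (ih (D.head a)).mpr ⟨m, h1, h2⟩⟩

lemma bSeq_d [DecidableEq V] [CompleteLattice R] [AddMonoid R]
    (D : Digraph' V A) (x : A → R) (d : V) (n : ℕ) : bSeq D x d n d = 0 := by
  cases n <;> simp [bSeq]

/-- If a path is at most as long as `n`, then `bSeq n` at its origin is a lower bound
of its resource. -/
lemma bSeq_le_pathRes [DecidableEq V] [CompleteLattice R] [AddMonoid R]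
    [CovariantClass R R (· + ·) (· ≤ ·)]
    [CovariantClass R R (Function.swap (· + ·)) (· ≤ ·)]
    (D : Digraph' V A) (x : A → R) (d : V)
    (hcyc : ∀ (u : V) (C : List A), C ≠ [] → D.IsPathFrom u u C → 0 ≤ pathRes x C) :
    ∀ (n : ℕ) (l : List A) (v : V), D.IsPathFrom v d l → l.length ≤ n →
      bSeq D x d n v ≤ pathRes x l := by
  intro n
  induction n with
  | zero =>
    intro l v hp hl
    have : l = [] := List.length_eq_zero_iff.mp (Nat.le_zero.mp hl)
    subst this
    cases hp
    simp [bSeq_d, pathRes]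
  | succ n ih =>
    intro l v hp hl
    cases l with
    | nil =>
      cases hp
      simp [bSeq_d, pathRes]
    | cons a l' =>
      obtain ⟨hta, hp'⟩ := hp
      by_cases hv : v = d
      · subst hv
        rw [bSeq_d]
        exact hcyc v (a :: l') (by simp) ⟨hta, hp'⟩
      · have h1 : bSeq D x d (n + 1) v ≤ x a + bSeq D x d n (D.head a) := by
          show (if v = d then (0 : R) else _) ≤ _
          rw [if_neg hv]
          exact inf_le_right.trans (iInf₂_le a hta)
        refine h1.trans ?_
        rw [pathRes_cons]
        exact add_le_add_right (ih l' (D.head a) hp' (Nat.succ_le_succ_iff.mp hl)) _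

lemma isPathFrom_concat_last (D : Digraph' V A) (u w : V) (s : List A) (b : A)
    (h : D.IsPathFrom u w (s ++ [b])) : w = D.head b := by
  rw [isPathFrom_append] at h
  obtain ⟨m, _, hm2⟩ := h
  obtain ⟨_, h2⟩ := hm2
  exact h2.symm

/-- A non-elementary path can be shortened without increasing its resource. -/
lemma shorten_step [DecidableEq V] [CompleteLattice R] [AddMonoid R]
    [CovariantClass R R (· + ·) (· ≤ ·)]
    [CovariantClass R R (Function.swap (· + ·)) (· ≤ ·)]
    (D : Digraph' V A) (x : A → R) (d : V)
    (hcyc : ∀ (u : V) (C : List A), C ≠ [] → D.IsPathFrom u u C → 0 ≤ pathRes x C) :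
    ∀ (l : List A) (v : V), D.IsPathFrom v d l → ¬ D.IsElementary v l →
      ∃ l' : List A, D.IsPathFrom v d l' ∧ l'.length < l.length ∧
        pathRes x l' ≤ pathRes x l := by
  intro l
  induction l with
  | nil =>
    intro v _ hne
    exact absurd (by simp [Digraph'.IsElementary]) hne
  | cons a l ih =>
    intro v hp hne
    obtain ⟨hta, hp'⟩ := hp
    rw [Digraph'.IsElementary, List.map_cons, List.nodup_cons] at hne
    push_neg at hne
    by_cases hmem : v ∈ D.head a :: l.map D.head
    · -- the path returns to v: cut the initial cycle
      rcases List.mem_cons.mp hmem with hv | hv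
      · -- head a = v : drop `a`
        refine ⟨l, by rw [hv]; exact hp', by simp, ?_⟩
        rw [pathRes_cons]
        calc pathRes x l = 0 + pathRes x l := (zero_add _).symm
          _ ≤ x a + pathRes x l := by
              refine add_le_add_left ?_ _
              have : pathRes x [a] = x a := by simp [pathRes]
              rw [← this]
              exact hcyc v [a] (by simp) ⟨hta, hv.symm⟩
      · -- v appears later
        obtain ⟨b, hb, hbv⟩ := List.mem_map.mp hv
        obtain ⟨s, t, rfl⟩ := List.mem_iff_append.mp hb
        have hsplit : D.IsPathFrom (D.head a) d ((s ++ [b]) ++ t) := by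
          simpa using hp'
        rw [isPathFrom_append] at hsplit
        obtain ⟨m, hm1, hm2⟩ := hsplit
        have hm : m = v := (isPathFrom_concat_last D _ _ s b hm1).trans hbv
        have hcycle : D.IsPathFrom v v (a :: (s ++ [b])) := ⟨hta, hm ▸ hm1⟩
        refine ⟨t, hm ▸ hm2, ?_, ?_⟩
        · simp [Nat.lt_succ_iff]
          omega
        · have hres : pathRes x (a :: (s ++ b :: t))
              = pathRes x (a :: (s ++ [b])) + pathRes x t := by
            have : a :: (s ++ b :: t) = (a :: (s ++ [b])) ++ t := by simp
            rw [this, pathRes_append]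
          rw [hres]
          calc pathRes x t = 0 + pathRes x t := (zero_add _).symm
            _ ≤ pathRes x (a :: (s ++ [b])) + pathRes x t :=
                add_le_add_left (hcyc v _ (by simp) hcycle) _
    · -- v does not reappear: the trouble is in the tail path
      have hne' : ¬ D.IsElementary (D.head a) l := by
        simpa [Digraph'.IsElementary] using hne hmem
      obtain ⟨l'', hp'', hlen, hres⟩ := ih (D.head a) hp' hne'
      refine ⟨a :: l'', ⟨hta, hp''⟩, by simpa using hlen, ?_⟩
      rw [pathRes_cons, pathRes_cons]
      exact add_le_add_right hres _

end Helpers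

/-- assume `x_C ≥ 0` for every cycle `C`. Let `b†` be the greatest
solution of the generalized dynamic programming equation, `b^∞ v = ⨅ₙ bⁿ v`, `ℓ*` the
maximum number of arcs of an elementary path in `D`, and
`b^opt v = ⨅ {x_P : P a v-d path}`. Then for every vertex `v` and every `v`-`d` path
`P`:  `b† v ≤ b^∞ v ≤ b^{ℓ*} v ≤ b^opt v ≤ x_P`. -/
theorem stmt5 {V A R : Type*} [Fintype V] [Fintype A] [DecidableEq V]
    [CompleteLattice R] [AddMonoid R]
    [CovariantClass R R (· + ·) (· ≤ ·)]
    [CovariantClass R R (Function.swap (· + ·)) (· ≤ ·)]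
    (D : Digraph' V A) (x : A → R) (d : V)
    (hcyc : ∀ (u : V) (C : List A), C ≠ [] → D.IsPathFrom u u C → 0 ≤ pathRes x C)
    (bdag : V → R)
    (hdag : IsGreatest {b : V → R | b d = 0 ∧ ∀ v, v ≠ d →
      b v = b v ⊓ ⨅ a ∈ {a : A | D.tail a = v}, (x a + b (D.head a))} bdag)
    (lstar : ℕ)
    (hlstar : IsGreatest {n : ℕ | ∃ (u w : V) (l : List A),
      D.IsPathFrom u w l ∧ D.IsElementary u l ∧ l.length = n} lstar) :
    ∀ v : V,
      bdag v ≤ (⨅ n : ℕ, bSeq D x d n v) ∧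
      (⨅ n : ℕ, bSeq D x d n v) ≤ bSeq D x d lstar v ∧
      bSeq D x d lstar v ≤ (⨅ l ∈ {l : List A | D.IsPathFrom v d l}, pathRes x l) ∧
      ∀ l : List A, D.IsPathFrom v d l →
        (⨅ l ∈ {l : List A | D.IsPathFrom v d l}, pathRes x l) ≤ pathRes x l := by
  have shorten : ∀ (l : List A) (v : V), D.IsPathFrom v d l →
      ∃ l' : List A, D.IsPathFrom v d l' ∧ D.IsElementary v l' ∧
        pathRes x l' ≤ pathRes x l := by
    have key : ∀ (n : ℕ) (l : List A) (v : V), l.length ≤ n → D.IsPathFrom v d l →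
        ∃ l' : List A, D.IsPathFrom v d l' ∧ D.IsElementary v l' ∧
          pathRes x l' ≤ pathRes x l := by
      intro n
      induction n with
      | zero =>
        intro l v hl hp
        have : l = [] := List.length_eq_zero_iff.mp (Nat.le_zero.mp hl)
        subst this
        exact ⟨[], hp, by simp [Digraph'.IsElementary], le_rfl⟩
      | succ n ih =>
        intro l v hl hp
        by_cases he : D.IsElementary v l
        · exact ⟨l, hp, he, le_rfl⟩
        · obtain ⟨l', hp', hlen, hres⟩ := shorten_step D x d hcyc l v hp he
          obtain ⟨l'', h1, h2, h3⟩ := ih l' v (by omega) hp'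
          exact ⟨l'', h1, h2, h3.trans hres⟩
    exact fun l v hp => key l.length l v le_rfl hp
  intro v
  refine ⟨?_, ?_, ?_, ?_⟩
  · -- bdag ≤ b^∞
    refine le_iInf fun n => ?_
    induction n generalizing v with
    | zero =>
      by_cases hv : v = d
      · subst hv; simp [bSeq, hdag.1.1]
      · simp [bSeq, hv]
    | succ n ih =>
      by_cases hv : v = d
      · subst hv; simp [bSeq, hdag.1.1]
      · show bdag v ≤ if v = d then (0:R) else _
        rw [if_neg hv]
        refine le_inf (ih v) (le_iInf₂ fun a ha => ?_)
        have h1 : bdag v ≤ x a + bdag (D.head a) := by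
          calc bdag v = bdag v ⊓ ⨅ a ∈ {a : A | D.tail a = v}, (x a + bdag (D.head a)) :=
                hdag.1.2 v hv
            _ ≤ _ := inf_le_right.trans (iInf₂_le a ha)
        exact h1.trans (add_le_add_right (ih (D.head a)) _)
  · exact iInf_le _ lstar
  · refine le_iInf₂ fun l hl => ?_
    obtain ⟨l', hp', he', hres'⟩ := shorten l v hl
    have hlen : l'.length ≤ lstar := hlstar.2 ⟨v, d, l', hp', he', rfl⟩
    exact (bSeq_le_pathRes D x d hcyc lstar l' v hp' hlen).trans hres'
  · exact fun l hl => iInf₂_le l hl
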